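/- arXiv:1609.02543 — 4 statements merged into one kernel-verified Lean document; each statement's English description precedes it below -/
import Mathlib

section
/- Let h_i ∈ C²(ℝ,ℝ) with |h_i'| ≤ D_h and |h_i''| ≤ M_h uniformly, and let h : ℓ² → L₂(ℓ²) be the diagonal Nemytskii operator. Then for all u, v, w, z ∈ ℓ²: ‖h(u) - h(v) - (h(w) - h(z))‖_{L₂(ℓ²)} ≤ √2 D_h ‖u - v - (w - z)‖ + 2 M_h ‖u - w‖ (‖u - v‖ + ‖w - z‖). -/
/-!
Coordinatewise, the mean value theorem applied to `t ↦ f (c + t (a - c)) - f (d + t (b - d))`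
gives `|f a - f b - (f c - f d)| ≤ D |a - b - (c - d)| + M |a - c| (|a - b| + |c - d|)`.
After bounding `|u i - w i|` by `‖u - w‖`, the coordinates of the left-hand side are dominated by
the ℓ² sequence `D |u - v - (w - z)| + M ‖u - w‖ (|u - v| + |w - z|)`, so the triangle inequality
in ℓ² gives the estimate even with `D, M` in place of `√2 D, 2 M`.
-/

open scoped ENNReal

namespace lp

variable {α : Type*} {E : α → Type*} [∀ i, NormedAddCommGroup (E i)] {p : ℝ≥0∞}

def normSeq (f : lp E p) : lp (fun _ : α => ℝ) p := ⟨fun i => ‖f i‖, (lp.memℓp f).norm⟩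

@[simp] theorem normSeq_apply (f : lp E p) (i : α) : normSeq f i = ‖f i‖ := rfl

@[simp] theorem norm_normSeq (f : lp E p) : ‖normSeq f‖ = ‖f‖ := by
  obtain (rfl | rfl | hp) := p.trichotomy
  · simp only [norm_eq_card_dsupport]
    congr 1
    simp
  · simp [norm_eq_ciSup]
  · simp [norm_eq_tsum_rpow hp]

end lp

theorem sqrt_tsum_sq_le_norm_of_abs_le {ι : Type*} {f : ι → ℝ} (g : lp (fun _ : ι => ℝ) 2)
    (hfg : ∀ i, |f i| ≤ g i) : √(∑' i, f i ^ 2) ≤ ‖g‖ := by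
  have hg : Summable fun i => g i ^ 2 := by
    simpa [Real.norm_eq_abs] using (lp.memℓp g).summable (p := 2) (by norm_num)
  have hfg2 (i : ι) : f i ^ 2 ≤ g i ^ 2 := sq_le_sq' (abs_le.1 (hfg i)).1 (abs_le.1 (hfg i)).2
  have hnorm : ‖g‖ ^ 2 = ∑' i, g i ^ 2 := by
    simpa [Real.norm_eq_abs] using lp.norm_rpow_eq_tsum (p := 2) (by norm_num) g
  rw [Real.sqrt_le_left (norm_nonneg g), hnorm]
  exact hg.of_nonneg_of_le (fun i => sq_nonneg _) hfg2 |>.tsum_le_tsum hfg2 hg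

section Scalar

variable {E : Type*} [NormedAddCommGroup E] [NormedSpace ℝ E]

theorem norm_deriv_sub_le_of_norm_deriv_deriv_le {f : ℝ → E} {M : ℝ} (hf : ContDiff ℝ 2 f)
    (hM : ∀ x, ‖deriv (deriv f) x‖ ≤ M) (x y : ℝ) :
    ‖deriv f x - deriv f y‖ ≤ M * |x - y| := by
  have hf' : Differentiable ℝ (deriv f) :=
    ((contDiff_succ_iff_deriv (n := 1)).1 hf).2.2.differentiable one_ne_zero
  simpa [Real.norm_eq_abs] using convex_univ.norm_image_sub_le_of_norm_deriv_le
    (fun z _ => hf' z) (fun z _ => hM z) (Set.mem_univ y) (Set.mem_univ x)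

theorem norm_sub_sub_sub_le_of_lipschitz_deriv {f : ℝ → E} {D M : ℝ} (hf : Differentiable ℝ f)
    (hD : ∀ x, ‖deriv f x‖ ≤ D) (hM : ∀ x y, ‖deriv f x - deriv f y‖ ≤ M * |x - y|)
    (a b c d : ℝ) :
    ‖f a - f b - (f c - f d)‖ ≤ D * |a - b - (c - d)| + M * |a - c| * (|a - b| + |c - d|) := by
  have hM0 : 0 ≤ M := by simpa using (norm_nonneg _).trans (hM 1 0)
  set θ : ℝ → ℝ := fun t => c + t * (a - c)
  set η : ℝ → ℝ := fun t => d + t * (b - d)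
  have hθη (t : ℝ) (ht : t ∈ Set.Icc (0 : ℝ) 1) : |θ t - η t| ≤ |a - b| + |c - d| := by
    obtain ⟨ht0, ht1⟩ := ht
    calc |θ t - η t| = |t * (a - b) + (1 - t) * (c - d)| := by congr 1; simp only [θ, η]; ring
      _ ≤ t * |a - b| + (1 - t) * |c - d| := by
        refine (abs_add_le _ _).trans_eq ?_
        rw [abs_mul, abs_mul, abs_of_nonneg ht0, abs_of_nonneg (sub_nonneg.2 ht1)]
      _ ≤ |a - b| + |c - d| := by nlinarith [abs_nonneg (a - b), abs_nonneg (c - d)]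
  have hderiv (t : ℝ) : HasDerivAt (fun t => f (θ t) - f (η t))
      ((a - b - (c - d)) • deriv f (η t) + (a - c) • (deriv f (θ t) - deriv f (η t))) t := by
    have hθ : HasDerivAt θ (a - c) t :=
      (((hasDerivAt_id t).mul_const (a - c)).const_add c).congr_deriv (one_mul _)
    have hη : HasDerivAt η (b - d) t :=
      (((hasDerivAt_id t).mul_const (b - d)).const_add d).congr_deriv (one_mul _)
    exact (((hf _).hasDerivAt.scomp t hθ).sub ((hf _).hasDerivAt.scomp t hη)).congr_deriv
      (by module)
  have hbound (t : ℝ) (ht : t ∈ Set.Ico (0 : ℝ) 1) :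
      ‖(a - b - (c - d)) • deriv f (η t) + (a - c) • (deriv f (θ t) - deriv f (η t))‖ ≤
        D * |a - b - (c - d)| + M * |a - c| * (|a - b| + |c - d|) := by
    refine (norm_add_le _ _).trans ?_
    rw [norm_smul, norm_smul, Real.norm_eq_abs, Real.norm_eq_abs]
    have h₁ := hD (η t)
    have h₂ := (hM (θ t) (η t)).trans
      (mul_le_mul_of_nonneg_left (hθη t (Set.Ico_subset_Icc_self ht)) hM0)
    nlinarith [abs_nonneg (a - b - (c - d)), abs_nonneg (a - c)]
  simpa [θ, η] using norm_image_sub_le_of_norm_deriv_le_segment_01'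
    (fun t _ => (hderiv t).hasDerivWithinAt) hbound

end Scalar

/-- For `h_i ∈ C²(ℝ)` with `|h_i'| ≤ D_h`, `|h_i''| ≤ M_h`, the diagonal Nemytskii
operator (whose Hilbert–Schmidt norm is `(Σ_i |·|²)^{1/2}` over the diagonal entries)
satisfies for all `u, v, w, z ∈ ℓ²`:
`‖h(u)-h(v)-(h(w)-h(z))‖_{L₂} ≤ √2 D_h ‖u-v-(w-z)‖ + 2M_h‖u-w‖(‖u-v‖+‖w-z‖)`. -/
theorem stmt10 (h : ℤ → ℝ → ℝ) (Dh Mh : ℝ) (hDh : 0 ≤ Dh) (hMh : 0 ≤ Mh)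
    (hC2 : ∀ i : ℤ, ContDiff ℝ 2 (h i))
    (hder : ∀ i : ℤ, ∀ ζ : ℝ, |deriv (h i) ζ| ≤ Dh)
    (hder2 : ∀ i : ℤ, ∀ ζ : ℝ, |deriv (deriv (h i)) ζ| ≤ Mh) :
    ∀ u v w z : lp (fun _ : ℤ => ℝ) 2,
      Real.sqrt (∑' i : ℤ, (h i (u i) - h i (v i) - (h i (w i) - h i (z i))) ^ 2) ≤
        Real.sqrt 2 * Dh * ‖u - v - (w - z)‖ + 2 * Mh * ‖u - w‖ * (‖u - v‖ + ‖w - z‖) := by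
  intro u v w z
  set G := Dh • lp.normSeq (u - v - (w - z)) +
    (Mh * ‖u - w‖) • (lp.normSeq (u - v) + lp.normSeq (w - z))
  have hpointwise (i : ℤ) : |h i (u i) - h i (v i) - (h i (w i) - h i (z i))| ≤ G i := by
    have hscalar := norm_sub_sub_sub_le_of_lipschitz_deriv ((hC2 i).differentiable two_ne_zero) (hder i)
      (norm_deriv_sub_le_of_norm_deriv_deriv_le (hC2 i) (hder2 i)) (u i) (v i) (w i) (z i)
    have hcoord : |u i - w i| ≤ ‖u - w‖ := lp.norm_apply_le_norm two_ne_zero (u - w) i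
    simp only [G, lp.coeFn_add, lp.coeFn_smul, lp.coeFn_sub, Pi.add_apply, Pi.smul_apply,
      Pi.sub_apply, lp.normSeq_apply, smul_eq_mul, Real.norm_eq_abs] at hscalar ⊢
    exact hscalar.trans (by gcongr)
  have hG : ‖G‖ ≤ Dh * ‖u - v - (w - z)‖ + Mh * ‖u - w‖ * (‖u - v‖ + ‖w - z‖) := by
    refine (norm_add_le _ _).trans ?_
    rw [norm_smul, norm_smul, Real.norm_of_nonneg hDh, Real.norm_of_nonneg (by positivity),
      lp.norm_normSeq]
    gcongr
    exact (norm_add_le _ _).trans_eq (by rw [lp.norm_normSeq, lp.norm_normSeq])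
  have hDh' : Dh ≤ √2 * Dh := le_mul_of_one_le_left hDh (Real.one_le_sqrt.2 one_le_two)
  have hMh' : Mh ≤ 2 * Mh := by linarith
  calc _ ≤ ‖G‖ := sqrt_tsum_sq_le_norm_of_abs_le G hpointwise
    _ ≤ Dh * ‖u - v - (w - z)‖ + Mh * ‖u - w‖ * (‖u - v‖ + ‖w - z‖) := hG
    _ ≤ _ := by gcongr
end

section
/- Let h_i ∈ C²(ℝ,ℝ) with |h_i'| ≤ D_h and |h_i''| ≤ M_h uniformly. Then the map u ↦ h(u) ∈ L₂(ℓ²) is Fréchet differentiable with derivative Dh(u) ∈ L(ℓ², L₂(ℓ²)) given by (Dh(u)v)w = (h_i'(u_i) v_i w_i)_{i∈ℤ}, satisfying ‖h(u+v) - h(u) - Dh(u)v‖_{L₂(ℓ²)} ≤ (M_h/2)‖v‖². -/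
/-!
The Taylor remainder `r_i = h_i(u_i + v_i) - h_i(u_i) - h_i'(u_i) v_i` obeys
`|r_i| ≤ (M_h/2) v_i²`, because `h_i'` is `M_h`-Lipschitz. Summing squares,
`∑ r_i² ≤ (M_h/2)² ∑ v_i⁴ ≤ (M_h/2)² (∑ v_i²)² = (M_h/2)² ‖v‖⁴`.
-/

open Set
open scoped NNReal

theorem norm_sub_sub_smul_le_of_lipschitzWith {E : Type*} [NormedAddCommGroup E]
    [NormedSpace ℝ E] {f f' : ℝ → E} {C : ℝ≥0} (hf : ∀ y, HasDerivAt f (f' y) y)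
    (hf' : LipschitzWith C f') (x t : ℝ) :
    ‖f (x + t) - f x - t • f' x‖ ≤ C / 2 * t ^ 2 := by
  -- Rescaling to `s ↦ f (x + s * t)` on `[0, 1]` treats both signs of `t` at once.
  set g : ℝ → E := fun s => f (x + s * t) - f x - (s * t) • f' x
  have hg : ∀ s, HasDerivAt g (t • (f' (x + s * t) - f' x)) s := by
    intro s
    have hmul : HasDerivAt (fun s : ℝ => s * t) t s := hasDerivAt_mul_const t
    have := (((hf _).scomp s (hmul.const_add x)).sub_const (f x)).sub (hmul.smul_const (f' x))
    rwa [← smul_sub] at this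
  have hB : ∀ s : ℝ, HasDerivAt (fun s => C * t ^ 2 / 2 * s ^ 2) (C * t ^ 2 * s) s := fun s =>
    ((hasDerivAt_pow 2 s).const_mul _).congr_deriv (by push_cast; ring)
  have hbound : ∀ s ∈ Ico (0 : ℝ) 1, ‖t • (f' (x + s * t) - f' x)‖ ≤ C * t ^ 2 * s := by
    intro s hs
    have hlip := hf'.dist_le_mul (x + s * t) x
    rw [dist_eq_norm, Real.dist_eq, add_sub_cancel_left, abs_mul, abs_of_nonneg hs.1] at hlip
    rw [norm_smul, Real.norm_eq_abs]
    calc |t| * ‖f' (x + s * t) - f' x‖ ≤ |t| * (C * (s * |t|)) := by gcongr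
      _ = C * t ^ 2 * s := by rw [← sq_abs t]; ring
  have := image_norm_le_of_norm_deriv_right_le_deriv_boundary
    (fun s _ => (hg s).continuousAt.continuousWithinAt) (fun s _ => (hg s).hasDerivWithinAt)
    (by simp [g]) hB hbound (right_mem_Icc.mpr zero_le_one)
  simp only [g, one_mul, one_pow, mul_one] at this
  exact this.trans_eq (by ring)

theorem abs_sub_sub_deriv_mul_le_of_contDiff_two {f : ℝ → ℝ} {M : ℝ} (hf : ContDiff ℝ 2 f)
    (hM : 0 ≤ M) (hf'' : ∀ y, |deriv (deriv f) y| ≤ M) (x t : ℝ) :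
    |f (x + t) - f x - deriv f x * t| ≤ M / 2 * t ^ 2 := by
  have hf' : ContDiff ℝ 1 (deriv f) := hf.iterate_deriv' 1 1
  have hlip : LipschitzWith M.toNNReal (deriv f) :=
    lipschitzWith_of_nnnorm_deriv_le (hf'.differentiable one_ne_zero) fun y => by
      rw [← NNReal.coe_le_coe, coe_nnnorm, Real.coe_toNNReal _ hM]
      exact hf'' y
  have := norm_sub_sub_smul_le_of_lipschitzWith
    (fun y => ((hf.differentiable (by norm_num)) y).hasDerivAt) hlip x t
  rwa [Real.coe_toNNReal _ hM, smul_eq_mul, mul_comm t, Real.norm_eq_abs] at this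

theorem sqrt_tsum_sq_le_mul_norm_sq {ι : Type*} (v : lp (fun _ : ι => ℝ) 2) (a : ι → ℝ)
    {K : ℝ} (hK : 0 ≤ K) (ha : ∀ i, |a i| ≤ K * v i ^ 2) :
    √(∑' i, a i ^ 2) ≤ K * ‖v‖ ^ 2 := by
  have hv_sq : Summable fun i => v i ^ 2 := by
    simpa [sq] using lp.summable_inner (𝕜 := ℝ) v v
  have hnorm : ‖v‖ ^ 2 = ∑' i, v i ^ 2 := by
    rw [← real_inner_self_eq_norm_sq, lp.inner_eq_tsum]
    simp [sq]
  have hle : ∀ i, v i ^ 2 ≤ ‖v‖ ^ 2 := fun i =>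
    hnorm ▸ hv_sq.le_tsum i fun j _ => sq_nonneg (v j)
  have hpt : ∀ i, a i ^ 2 ≤ K ^ 2 * ‖v‖ ^ 2 * v i ^ 2 := by
    intro i
    calc a i ^ 2 = |a i| ^ 2 := (sq_abs _).symm
      _ ≤ (K * v i ^ 2) ^ 2 := by gcongr; exact ha i
      _ = K ^ 2 * v i ^ 2 * v i ^ 2 := by ring
      _ ≤ K ^ 2 * ‖v‖ ^ 2 * v i ^ 2 := by gcongr K ^ 2 * ?_ * _; exact hle i
  have hbound_sum := hv_sq.mul_left (K ^ 2 * ‖v‖ ^ 2)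
  have hsum : ∑' i, a i ^ 2 ≤ (K * ‖v‖ ^ 2) ^ 2 := by
    calc ∑' i, a i ^ 2 ≤ ∑' i, K ^ 2 * ‖v‖ ^ 2 * v i ^ 2 :=
          (hbound_sum.of_nonneg_of_le (fun i => sq_nonneg _) hpt).tsum_le_tsum hpt hbound_sum
      _ = (K * ‖v‖ ^ 2) ^ 2 := by rw [tsum_mul_left, ← hnorm]; ring
  exact Real.sqrt_le_iff.mpr ⟨by positivity, hsum⟩

theorem stmt12_general (h : ℤ → ℝ → ℝ) (Mh : ℝ) (hMh : 0 ≤ Mh)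
    (hC2 : ∀ i : ℤ, ContDiff ℝ 2 (h i))
    (hder2 : ∀ i : ℤ, ∀ ζ : ℝ, |deriv (deriv (h i)) ζ| ≤ Mh) :
    ∀ u v : lp (fun _ : ℤ => ℝ) 2,
      Real.sqrt (∑' i : ℤ, (h i (u i + v i) - h i (u i) - deriv (h i) (u i) * v i) ^ 2) ≤
        (Mh / 2) * ‖v‖ ^ 2 := fun u v =>
  sqrt_tsum_sq_le_mul_norm_sq v _ (by positivity) fun i =>
    abs_sub_sub_deriv_mul_le_of_contDiff_two (hC2 i) hMh (hder2 i) (u i) (v i)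

/-- For `h_i ∈ C²(ℝ)` with `|h_i'| ≤ D_h` and `|h_i''| ≤ M_h`, the diagonal
Nemytskii operator `u ↦ h(u) ∈ L₂(ℓ²)` has candidate derivative
`(Dh(u)v)w = (h_i'(u_i)v_iw_i)_i`, and (in the Hilbert–Schmidt norm, computed over
diagonal entries) `‖h(u+v) - h(u) - Dh(u)v‖_{L₂(ℓ²)} ≤ (M_h/2)‖v‖²`. -/
theorem stmt12 (h : ℤ → ℝ → ℝ) (Dh Mh : ℝ) (hDh : 0 ≤ Dh) (hMh : 0 ≤ Mh)
    (hC2 : ∀ i : ℤ, ContDiff ℝ 2 (h i))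
    (hsum : Summable fun i : ℤ => (h i 0) ^ 2)
    (hder : ∀ i : ℤ, ∀ ζ : ℝ, |deriv (h i) ζ| ≤ Dh)
    (hder2 : ∀ i : ℤ, ∀ ζ : ℝ, |deriv (deriv (h i)) ζ| ≤ Mh) :
    ∀ u v : lp (fun _ : ℤ => ℝ) 2,
      Real.sqrt (∑' i : ℤ, (h i (u i + v i) - h i (u i) - deriv (h i) (u i) * v i) ^ 2) ≤
        (Mh / 2) * ‖v‖ ^ 2 :=
  stmt12_general h Mh hMh hC2 hder2
end

section
/- The Fréchet derivative Dh of the diagonal Nemytskii operator is Lipschitz: ‖Dh(u) - Dh(v)‖_{L(ℓ², L₂(ℓ²))} ≤ M_h ‖u - v‖ for all u, v ∈ ℓ², and uniformly bounded: ‖Dh(u)‖ ≤ D_h. -/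
/-!
`Dh(u)z` acts on `w` as multiplication by the sequence `(h_i'(u_i) z_i)_i`, so its Hilbert–Schmidt
norm is the `ℓ²` norm of that sequence. Multiplying `z` by a sequence bounded by `C` scales its
`ℓ²` norm by at most `C`; the coefficients `h_i'(u_i)` are bounded by `D_h`, and by the mean value
theorem the coefficients `h_i'(u_i) - h_i'(v_i)` are bounded by `M_h |u_i - v_i| ≤ M_h ‖u - v‖`.
-/

namespace lp

variable {ι : Type*}

theorem tsum_sq_eq_norm_sq (z : lp (fun _ : ι => ℝ) 2) : ∑' i, z i ^ 2 = ‖z‖ ^ 2 := by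
  simpa [sq] using (lp.inner_eq_tsum z z).symm.trans (real_inner_self_eq_norm_sq z)

theorem summable_sq (z : lp (fun _ : ι => ℝ) 2) : Summable fun i => z i ^ 2 := by
  simpa [sq] using lp.summable_inner (𝕜 := ℝ) z z

theorem sqrt_tsum_mul_sq_le {c : ι → ℝ} {C : ℝ} (hC : 0 ≤ C) (hc : ∀ i, |c i| ≤ C)
    (z : lp (fun _ : ι => ℝ) 2) : √(∑' i, (c i * z i) ^ 2) ≤ C * ‖z‖ := by
  have hle : ∀ i, (c i * z i) ^ 2 ≤ C ^ 2 * z i ^ 2 := fun i => by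
    obtain ⟨hlo, hhi⟩ := abs_le.mp (hc i)
    rw [mul_pow]
    exact mul_le_mul_of_nonneg_right (sq_le_sq' hlo hhi) (sq_nonneg _)
  have hsum : ∑' i, (c i * z i) ^ 2 ≤ C ^ 2 * ‖z‖ ^ 2 := by
    rw [← tsum_sq_eq_norm_sq, ← tsum_mul_left]
    exact Summable.tsum_le_tsum hle
      (((summable_sq z).mul_left _).of_nonneg_of_le (fun _ => sq_nonneg _) hle)
      ((summable_sq z).mul_left _)
  calc √(∑' i, (c i * z i) ^ 2) ≤ √((C * ‖z‖) ^ 2) := Real.sqrt_le_sqrt (by rwa [mul_pow])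
    _ = C * ‖z‖ := Real.sqrt_sq (by positivity)

theorem abs_apply_sub_le_norm_sub (u v : lp (fun _ : ι => ℝ) 2) (i : ι) :
    |u i - v i| ≤ ‖u - v‖ := by
  simpa using lp.norm_apply_le_norm two_ne_zero (u - v) i

end lp

theorem abs_deriv_sub_deriv_le {f : ℝ → ℝ} {M : ℝ} (hf : ContDiff ℝ 2 f)
    (hf'' : ∀ x, |deriv (deriv f) x| ≤ M) (x y : ℝ) :
    |deriv f x - deriv f y| ≤ M * |x - y| := by
  have hdiff : Differentiable ℝ (deriv f) :=
    ((contDiff_succ_iff_deriv (n := 1)).mp hf).2.2.differentiable one_ne_zero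
  simpa using Convex.norm_image_sub_le_of_norm_deriv_le (fun x _ => hdiff x)
    (fun x _ => hf'' x) convex_univ (Set.mem_univ y) (Set.mem_univ x)

theorem stmt13_general (h : ℤ → ℝ → ℝ) (Dh Mh : ℝ)
    (hC2 : ∀ i : ℤ, ContDiff ℝ 2 (h i))
    (hder : ∀ i : ℤ, ∀ ζ : ℝ, |deriv (h i) ζ| ≤ Dh)
    (hder2 : ∀ i : ℤ, ∀ ζ : ℝ, |deriv (deriv (h i)) ζ| ≤ Mh) :
    ∀ u v z : lp (fun _ : ℤ => ℝ) 2, ‖z‖ ≤ 1 →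
      Real.sqrt (∑' i : ℤ, (deriv (h i) (u i) * z i) ^ 2) ≤ Dh ∧
      Real.sqrt (∑' i : ℤ, ((deriv (h i) (u i) - deriv (h i) (v i)) * z i) ^ 2) ≤
        Mh * ‖u - v‖ := by
  intro u v z hz
  have hDh : 0 ≤ Dh := (abs_nonneg _).trans (hder 0 0)
  have hMh : 0 ≤ Mh := (abs_nonneg _).trans (hder2 0 0)
  have hlip (i : ℤ) : |deriv (h i) (u i) - deriv (h i) (v i)| ≤ Mh * ‖u - v‖ :=
    (abs_deriv_sub_deriv_le (hC2 i) (hder2 i) _ _).trans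
      (mul_le_mul_of_nonneg_left (lp.abs_apply_sub_le_norm_sub u v i) hMh)
  constructor
  · calc _ ≤ Dh * ‖z‖ := lp.sqrt_tsum_mul_sq_le hDh (fun i => hder i (u i)) z
      _ ≤ Dh := mul_le_of_le_one_right hDh hz
  · calc _ ≤ Mh * ‖u - v‖ * ‖z‖ := lp.sqrt_tsum_mul_sq_le (by positivity) hlip z
      _ ≤ Mh * ‖u - v‖ := mul_le_of_le_one_right (by positivity) hz

/-- The derivative `Dh(u) ∈ L(ℓ², L₂(ℓ²))` of the diagonal Nemytskii operator, given by
`(Dh(u)v)w = (h_i'(u_i)v_iw_i)_i`, is uniformly bounded by `D_h` and Lipschitz with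
constant `M_h`: for every direction `z` of norm at most one, the Hilbert–Schmidt norms
of `Dh(u)z` and `(Dh(u) - Dh(v))z` are bounded by `D_h` and `M_h‖u-v‖` respectively. -/
theorem stmt13 (h : ℤ → ℝ → ℝ) (Dh Mh : ℝ) (hDh : 0 ≤ Dh) (hMh : 0 ≤ Mh)
    (hC2 : ∀ i : ℤ, ContDiff ℝ 2 (h i))
    (hder : ∀ i : ℤ, ∀ ζ : ℝ, |deriv (h i) ζ| ≤ Dh)
    (hder2 : ∀ i : ℤ, ∀ ζ : ℝ, |deriv (deriv (h i)) ζ| ≤ Mh) :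
    ∀ u v z : lp (fun _ : ℤ => ℝ) 2, ‖z‖ ≤ 1 →
      Real.sqrt (∑' i : ℤ, (deriv (h i) (u i) * z i) ^ 2) ≤ Dh ∧
      Real.sqrt (∑' i : ℤ, ((deriv (h i) (u i) - deriv (h i) (v i)) * z i) ^ 2) ≤
        Mh * ‖u - v‖ :=
  stmt13_general h Dh Mh hC2 hder hder2
end

section
/- For any T > 0 and exponents a, b > -1 with a + b + 1 > 0, the quantity k(ρ) := sup_{0 ≤ s < t ≤ T} ∫_s^t e^{-ρ(t-r)} (r-s)^a (t-r)^b dr tends to 0 as ρ → ∞. -/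
open MeasureTheory

/-- For `0 < ε ≤ 1` and `x > 0`, `exp (-x) ≤ x ^ (-ε)`. -/
lemma exp_neg_le_rpow {ε x : ℝ} (hε : 0 < ε) (hε1 : ε ≤ 1) (hx : 0 < x) :
    Real.exp (-x) ≤ x ^ (-ε) := by
  have h : x ^ ε ≤ Real.exp x := by
    rcases le_total x 1 with h1 | h1
    · calc x ^ ε ≤ 1 := Real.rpow_le_one hx.le h1 hε.le
        _ ≤ Real.exp x := by
          have := Real.add_one_le_exp x
          nlinarith [hx]
    · calc x ^ ε ≤ x ^ (1:ℝ) := Real.rpow_le_rpow_of_exponent_le h1 hε1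
        _ = x := Real.rpow_one x
        _ ≤ Real.exp x := by nlinarith [Real.add_one_le_exp x]
  rw [Real.exp_neg, Real.rpow_neg hx.le]
  exact inv_anti₀ (Real.rpow_pos_of_pos hx ε) h

/-- Half of the beta bound: integrability and bound on `s..(s+t)/2`. -/
lemma half_bound {a c s t T : ℝ} (ha : -1 < a) (hc : -1 < c) (hac : 0 < a + c + 1)
    (hs : 0 ≤ s) (hst : s < t) (htT : t ≤ T) :
    IntervalIntegrable (fun r => (r - s) ^ a * (t - r) ^ c) volume s ((s + t) / 2) ∧
    ∫ r in s..(s + t) / 2, (r - s) ^ a * (t - r) ^ c ≤ T ^ (a + c + 1) / (a + 1) := by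
  have hd : 0 < t - s := by linarith
  have hdT : t - s ≤ T := by linarith
  have hsm : s ≤ (s + t) / 2 := by linarith
  have hK0 : (0:ℝ) ≤ max ((t - s) ^ c) (((t - s) / 2) ^ c) :=
    le_trans (Real.rpow_nonneg hd.le c) (le_max_left _ _)
  -- pointwise bound on Icc
  have hbd : ∀ r ∈ Set.Icc s ((s + t) / 2),
      (r - s) ^ a * (t - r) ^ c ≤ max ((t - s) ^ c) (((t - s) / 2) ^ c) * (r - s) ^ a := by
    intro r hr
    have h1 : (t - s) / 2 ≤ t - r := by have := hr.2; linarith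
    have h2 : t - r ≤ t - s := by have := hr.1; linarith
    have htr : 0 < t - r := lt_of_lt_of_le (by linarith) h1
    have hKc : (t - r) ^ c ≤ max ((t - s) ^ c) (((t - s) / 2) ^ c) := by
      rcases le_or_gt 0 c with h | h
      · exact le_trans (Real.rpow_le_rpow htr.le h2 h) (le_max_left _ _)
      · exact le_trans (Real.rpow_le_rpow_of_nonpos (by linarith) h1 h.le)
          (le_max_right _ _)
    have hrs : (0:ℝ) ≤ r - s := by linarith [hr.1]
    calc (r - s) ^ a * (t - r) ^ c
        ≤ (r - s) ^ a * (max ((t - s) ^ c) (((t - s) / 2) ^ c)) :=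
          mul_le_mul_of_nonneg_left hKc (Real.rpow_nonneg hrs a)
      _ = _ := mul_comm _ _
  -- integrability of the comparison function
  have hIg : IntervalIntegrable (fun r => (r - s) ^ a) volume s ((s + t) / 2) := by
    have h0 : IntervalIntegrable (fun x : ℝ => x ^ a) volume 0 ((s + t) / 2 - s) :=
      intervalIntegral.intervalIntegrable_rpow' ha
    simpa using h0.comp_sub_right s
  -- integrability of f
  have hIf : IntervalIntegrable (fun r => (r - s) ^ a * (t - r) ^ c) volume s ((s + t) / 2) := by
    rw [intervalIntegrable_iff] at hIg ⊢
    apply Integrable.mono' (hIg.const_mul (max ((t - s) ^ c) (((t - s) / 2) ^ c)))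
    · apply Measurable.aestronglyMeasurable; fun_prop
    · rw [Set.uIoc_of_le hsm]
      filter_upwards [ae_restrict_mem measurableSet_Ioc] with r hr
      have hrs : (0:ℝ) < r - s := by linarith [hr.1]
      have htr : (0:ℝ) < t - r := by have := hr.2; linarith
      rw [Real.norm_eq_abs, abs_of_nonneg
        (mul_nonneg (Real.rpow_nonneg hrs.le a) (Real.rpow_nonneg htr.le c))]
      exact hbd r ⟨hr.1.le, hr.2⟩
  refine ⟨hIf, ?_⟩
  have hval : ∫ r in s..((s + t) / 2), (r - s) ^ a
      = ((t - s) / 2) ^ (a + 1) / (a + 1) := by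
    rw [intervalIntegral.integral_comp_sub_right (fun x => x ^ a) s]
    have h2 : (s + t) / 2 - s = (t - s) / 2 := by ring
    rw [h2, show s - s = (0:ℝ) by ring, integral_rpow (Or.inl ha),
      Real.zero_rpow (by linarith)]
    ring
  have ha1 : (0:ℝ) < a + 1 := by linarith
  calc ∫ r in s..((s + t) / 2), (r - s) ^ a * (t - r) ^ c
      ≤ ∫ r in s..((s + t) / 2),
          max ((t - s) ^ c) (((t - s) / 2) ^ c) * (r - s) ^ a :=
        intervalIntegral.integral_mono_on hsm hIf (hIg.const_mul _) hbd
    _ = max ((t - s) ^ c) (((t - s) / 2) ^ c) * (((t - s) / 2) ^ (a + 1) / (a + 1)) := by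
        rw [intervalIntegral.integral_const_mul, hval]
    _ = max ((t - s) ^ c) (((t - s) / 2) ^ c) * ((t - s) / 2) ^ (a + 1) / (a + 1) := by
        ring
    _ ≤ T ^ (a + c + 1) / (a + 1) := by
        have hD : (0:ℝ) < (t - s) / 2 := by linarith
        have h1 : (t - s) ^ c * ((t - s) / 2) ^ (a + 1) ≤ T ^ (a + c + 1) := by
          calc (t - s) ^ c * ((t - s) / 2) ^ (a + 1)
              ≤ (t - s) ^ c * (t - s) ^ (a + 1) :=
                mul_le_mul_of_nonneg_left
                  (Real.rpow_le_rpow hD.le (by linarith) (by linarith))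
                  (Real.rpow_nonneg hd.le c)
            _ = (t - s) ^ (c + (a + 1)) := (Real.rpow_add hd c (a + 1)).symm
            _ ≤ T ^ (a + c + 1) := by
                rw [show c + (a + 1) = a + c + 1 by ring]
                exact Real.rpow_le_rpow hd.le hdT hac.le
        have h2 : ((t - s) / 2) ^ c * ((t - s) / 2) ^ (a + 1) ≤ T ^ (a + c + 1) := by
          rw [← Real.rpow_add hD, show c + (a + 1) = a + c + 1 by ring]
          exact Real.rpow_le_rpow hD.le (by linarith) hac.le
        have h3 : max ((t - s) ^ c) (((t - s) / 2) ^ c) * ((t - s) / 2) ^ (a + 1)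
            ≤ T ^ (a + c + 1) := by
          rw [max_mul_of_nonneg _ _ (Real.rpow_nonneg hD.le (a + 1))]
          exact max_le h1 h2
        gcongr

/-- Other half of the beta bound: integrability and bound on `(s+t)/2..t`. -/
lemma half_bound' {a c s t T : ℝ} (ha : -1 < a) (hc : -1 < c) (hac : 0 < a + c + 1)
    (hs : 0 ≤ s) (hst : s < t) (htT : t ≤ T) :
    IntervalIntegrable (fun r => (r - s) ^ a * (t - r) ^ c) volume ((s + t) / 2) t ∧
    ∫ r in ((s + t) / 2)..t, (r - s) ^ a * (t - r) ^ c ≤ T ^ (a + c + 1) / (c + 1) := by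
  have hd : 0 < t - s := by linarith
  have hdT : t - s ≤ T := by linarith
  have hsm : (s + t) / 2 ≤ t := by linarith
  -- pointwise bound on Icc
  have hbd : ∀ r ∈ Set.Icc ((s + t) / 2) t,
      (r - s) ^ a * (t - r) ^ c ≤ max ((t - s) ^ a) (((t - s) / 2) ^ a) * (t - r) ^ c := by
    intro r hr
    have h1 : (t - s) / 2 ≤ r - s := by have := hr.1; linarith
    have h2 : r - s ≤ t - s := by have := hr.2; linarith
    have hrs : 0 < r - s := lt_of_lt_of_le (by linarith) h1
    have hKc : (r - s) ^ a ≤ max ((t - s) ^ a) (((t - s) / 2) ^ a) := by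
      rcases le_or_gt 0 a with h | h
      · exact le_trans (Real.rpow_le_rpow hrs.le h2 h) (le_max_left _ _)
      · exact le_trans (Real.rpow_le_rpow_of_nonpos (by linarith) h1 h.le)
          (le_max_right _ _)
    have htr : (0:ℝ) ≤ t - r := by linarith [hr.2]
    exact mul_le_mul_of_nonneg_right hKc (Real.rpow_nonneg htr c)
  -- integrability of the comparison function
  have hIg : IntervalIntegrable (fun r => (t - r) ^ c) volume ((s + t) / 2) t := by
    have h0 : IntervalIntegrable (fun x : ℝ => x ^ c) volume 0 (t - (s + t) / 2) :=
      intervalIntegral.intervalIntegrable_rpow' hc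
    have := h0.comp_sub_left t
    simpa using this.symm
  -- integrability of f
  have hIf : IntervalIntegrable (fun r => (r - s) ^ a * (t - r) ^ c) volume ((s + t) / 2) t := by
    rw [intervalIntegrable_iff] at hIg ⊢
    apply Integrable.mono' (hIg.const_mul (max ((t - s) ^ a) (((t - s) / 2) ^ a)))
    · apply Measurable.aestronglyMeasurable; fun_prop
    · rw [Set.uIoc_of_le hsm]
      filter_upwards [ae_restrict_mem measurableSet_Ioc] with r hr
      have hrs : (0:ℝ) < r - s := by have := hr.1; linarith
      have htr : (0:ℝ) ≤ t - r := by linarith [hr.2]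
      rw [Real.norm_eq_abs, abs_of_nonneg
        (mul_nonneg (Real.rpow_nonneg hrs.le a) (Real.rpow_nonneg htr c))]
      exact hbd r ⟨hr.1.le, hr.2⟩
  refine ⟨hIf, ?_⟩
  have hval : ∫ r in ((s + t) / 2)..t, (t - r) ^ c
      = ((t - s) / 2) ^ (c + 1) / (c + 1) := by
    rw [intervalIntegral.integral_comp_sub_left (fun x => x ^ c) t]
    have h2 : t - (s + t) / 2 = (t - s) / 2 := by ring
    rw [h2, show t - t = (0:ℝ) by ring, integral_rpow (Or.inl hc),
      Real.zero_rpow (by linarith)]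
    ring
  have hc1 : (0:ℝ) < c + 1 := by linarith
  calc ∫ r in ((s + t) / 2)..t, (r - s) ^ a * (t - r) ^ c
      ≤ ∫ r in ((s + t) / 2)..t,
          max ((t - s) ^ a) (((t - s) / 2) ^ a) * (t - r) ^ c :=
        intervalIntegral.integral_mono_on hsm hIf (hIg.const_mul _) hbd
    _ = max ((t - s) ^ a) (((t - s) / 2) ^ a) * (((t - s) / 2) ^ (c + 1) / (c + 1)) := by
        rw [intervalIntegral.integral_const_mul, hval]
    _ = max ((t - s) ^ a) (((t - s) / 2) ^ a) * ((t - s) / 2) ^ (c + 1) / (c + 1) := by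
        ring
    _ ≤ T ^ (a + c + 1) / (c + 1) := by
        have hD : (0:ℝ) < (t - s) / 2 := by linarith
        have h1 : (t - s) ^ a * ((t - s) / 2) ^ (c + 1) ≤ T ^ (a + c + 1) := by
          calc (t - s) ^ a * ((t - s) / 2) ^ (c + 1)
              ≤ (t - s) ^ a * (t - s) ^ (c + 1) :=
                mul_le_mul_of_nonneg_left
                  (Real.rpow_le_rpow hD.le (by linarith) (by linarith))
                  (Real.rpow_nonneg hd.le a)
            _ = (t - s) ^ (a + (c + 1)) := (Real.rpow_add hd a (c + 1)).symm
            _ ≤ T ^ (a + c + 1) := by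
                rw [show a + (c + 1) = a + c + 1 by ring]
                exact Real.rpow_le_rpow hd.le hdT hac.le
        have h2 : ((t - s) / 2) ^ a * ((t - s) / 2) ^ (c + 1) ≤ T ^ (a + c + 1) := by
          rw [← Real.rpow_add hD, show a + (c + 1) = a + c + 1 by ring]
          exact Real.rpow_le_rpow hD.le (by linarith) hac.le
        have h3 : max ((t - s) ^ a) (((t - s) / 2) ^ a) * ((t - s) / 2) ^ (c + 1)
            ≤ T ^ (a + c + 1) := by
          rw [max_mul_of_nonneg _ _ (Real.rpow_nonneg hD.le (c + 1))]
          exact max_le h1 h2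
        gcongr

/-- Combined beta bound on `Ioo s t`. -/
lemma beta_bound {a c s t T : ℝ} (ha : -1 < a) (hc : -1 < c) (hac : 0 < a + c + 1)
    (hs : 0 ≤ s) (hst : s < t) (htT : t ≤ T) :
    IntegrableOn (fun r => (r - s) ^ a * (t - r) ^ c) (Set.Ioo s t) volume ∧
    ∫ r in Set.Ioo s t, (r - s) ^ a * (t - r) ^ c
      ≤ T ^ (a + c + 1) * ((a + 1)⁻¹ + (c + 1)⁻¹) := by
  obtain ⟨h1, hb1⟩ := half_bound ha hc hac hs hst htT
  obtain ⟨h2, hb2⟩ := half_bound' ha hc hac hs hst htT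
  have hI : IntervalIntegrable (fun r => (r - s) ^ a * (t - r) ^ c) volume s t :=
    h1.trans h2
  constructor
  · exact hI.1.mono_set Set.Ioo_subset_Ioc_self
  · have he : ∫ r in Set.Ioo s t, (r - s) ^ a * (t - r) ^ c
        = ∫ r in s..t, (r - s) ^ a * (t - r) ^ c := by
      rw [intervalIntegral.integral_of_le hst.le, integral_Ioc_eq_integral_Ioo]
    rw [he, ← intervalIntegral.integral_add_adjacent_intervals h1 h2]
    calc (∫ r in s..((s + t) / 2), (r - s) ^ a * (t - r) ^ c)
          + ∫ r in ((s + t) / 2)..t, (r - s) ^ a * (t - r) ^ c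
        ≤ T ^ (a + c + 1) / (a + 1) + T ^ (a + c + 1) / (c + 1) := add_le_add hb1 hb2
      _ = T ^ (a + c + 1) * ((a + 1)⁻¹ + (c + 1)⁻¹) := by ring

/-- For `T > 0` and `a, b > -1` with `a + b + 1 > 0`,
`k(ρ) = sup_{0 ≤ s < t ≤ T} ∫_s^t e^{-ρ(t-r)}(r-s)^a (t-r)^b dr → 0` as `ρ → ∞`. -/
theorem stmt14 (T a b : ℝ) (hT : 0 < T) (ha : -1 < a) (hb : -1 < b)
    (hab : 0 < a + b + 1) :
    Filter.Tendsto
      (fun ρ : ℝ =>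
        ⨆ p : {p : ℝ × ℝ // 0 ≤ p.1 ∧ p.1 < p.2 ∧ p.2 ≤ T},
          ∫ r in Set.Ioo p.1.1 p.1.2,
            Real.exp (-ρ * (p.1.2 - r)) * (r - p.1.1) ^ a * (p.1.2 - r) ^ b)
      Filter.atTop (nhds 0) := by
  set ε : ℝ := min 1 (min ((a + b + 1) / 2) ((b + 1) / 2)) with hε_def
  have hε : 0 < ε := by
    apply lt_min one_pos
    apply lt_min <;> linarith
  have hε1 : ε ≤ 1 := min_le_left _ _
  have hεab : ε ≤ (a + b + 1) / 2 := le_trans (min_le_right _ _) (min_le_left _ _)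
  have hεb : ε ≤ (b + 1) / 2 := le_trans (min_le_right _ _) (min_le_right _ _)
  have hbε : -1 < b - ε := by linarith
  have habε : 0 < a + (b - ε) + 1 := by linarith
  set C : ℝ := T ^ (a + (b - ε) + 1) * ((a + 1)⁻¹ + ((b - ε) + 1)⁻¹) with hC_def
  have hC0 : 0 ≤ C := by
    apply mul_nonneg (Real.rpow_nonneg hT.le _)
    have : (0:ℝ) < a + 1 := by linarith
    have : (0:ℝ) < (b - ε) + 1 := by linarith
    positivity
  -- lower bound : supremum is nonneg for every ρ
  have hlow : ∀ ρ : ℝ, 0 ≤ ⨆ p : {p : ℝ × ℝ // 0 ≤ p.1 ∧ p.1 < p.2 ∧ p.2 ≤ T},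
      ∫ r in Set.Ioo p.1.1 p.1.2,
        Real.exp (-ρ * (p.1.2 - r)) * (r - p.1.1) ^ a * (p.1.2 - r) ^ b := by
    intro ρ
    apply Real.iSup_nonneg
    intro p
    apply setIntegral_nonneg measurableSet_Ioo
    intro r hr
    have h1 : (0:ℝ) ≤ r - p.1.1 := by linarith [hr.1]
    have h2 : (0:ℝ) ≤ p.1.2 - r := by linarith [hr.2]
    positivity
  -- upper bound for ρ ≥ 1
  have hup : ∀ ρ : ℝ, 1 ≤ ρ → (⨆ p : {p : ℝ × ℝ // 0 ≤ p.1 ∧ p.1 < p.2 ∧ p.2 ≤ T},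
      ∫ r in Set.Ioo p.1.1 p.1.2,
        Real.exp (-ρ * (p.1.2 - r)) * (r - p.1.1) ^ a * (p.1.2 - r) ^ b)
      ≤ ρ ^ (-ε) * C := by
    intro ρ hρ
    have hρ0 : (0:ℝ) < ρ := by linarith
    have hρε : (0:ℝ) ≤ ρ ^ (-ε) := Real.rpow_nonneg hρ0.le _
    apply Real.iSup_le _ (mul_nonneg hρε hC0)
    rintro ⟨⟨s, t⟩, hs, hst, htT⟩
    simp only
    obtain ⟨hInt, hBnd⟩ := beta_bound ha hbε habε hs hst htT
    have key : (∫ r in Set.Ioo s t,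
        Real.exp (-ρ * (t - r)) * (r - s) ^ a * (t - r) ^ b)
        ≤ ∫ r in Set.Ioo s t, ρ ^ (-ε) * ((r - s) ^ a * (t - r) ^ (b - ε)) := by
      apply integral_mono_of_nonneg
      · filter_upwards [ae_restrict_mem measurableSet_Ioo] with r hr
        have h1 : (0:ℝ) ≤ r - s := by linarith [hr.1]
        have h2 : (0:ℝ) ≤ t - r := by linarith [hr.2]
        positivity
      · exact hInt.const_mul _
      · filter_upwards [ae_restrict_mem measurableSet_Ioo] with r hr
        have h1 : (0:ℝ) < r - s := by linarith [hr.1]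
        have h2 : (0:ℝ) < t - r := by linarith [hr.2]
        have hexp : Real.exp (-ρ * (t - r)) ≤ ρ ^ (-ε) * (t - r) ^ (-ε) := by
          rw [neg_mul, ← Real.mul_rpow hρ0.le h2.le]
          exact exp_neg_le_rpow hε hε1 (mul_pos hρ0 h2)
        calc Real.exp (-ρ * (t - r)) * (r - s) ^ a * (t - r) ^ b
            ≤ (ρ ^ (-ε) * (t - r) ^ (-ε)) * (r - s) ^ a * (t - r) ^ b := by
              apply mul_le_mul_of_nonneg_right
                (mul_le_mul_of_nonneg_right hexp (Real.rpow_nonneg h1.le a))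
                (Real.rpow_nonneg h2.le b)
          _ = ρ ^ (-ε) * ((r - s) ^ a * (t - r) ^ (b - ε)) := by
              rw [show b - ε = -ε + b by ring, Real.rpow_add h2 (-ε) b]
              ring
    calc (∫ r in Set.Ioo s t,
            Real.exp (-ρ * (t - r)) * (r - s) ^ a * (t - r) ^ b)
        ≤ ∫ r in Set.Ioo s t, ρ ^ (-ε) * ((r - s) ^ a * (t - r) ^ (b - ε)) := key
      _ = ρ ^ (-ε) * ∫ r in Set.Ioo s t, (r - s) ^ a * (t - r) ^ (b - ε) :=
          integral_const_mul _ _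
      _ ≤ ρ ^ (-ε) * C := mul_le_mul_of_nonneg_left hBnd hρε
  -- squeeze
  have htop : Filter.Tendsto (fun ρ : ℝ => ρ ^ (-ε) * C) Filter.atTop (nhds 0) := by
    have := (tendsto_rpow_neg_atTop hε).mul_const C
    simpa using this
  apply tendsto_of_tendsto_of_tendsto_of_le_of_le' tendsto_const_nhds htop
  · exact Filter.Eventually.of_forall hlow
  · filter_upwards [Filter.eventually_ge_atTop 1] with ρ hρ
    exact hup ρ hρ
end
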